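/- arXiv:1706.06085 — 3 statements merged into one kernel-verified Lean document; each statement's English description precedes it below -/
import Mathlib

section
/- For any rooted binary phylogenetic tree T on a taxon set X evolving under the symmetric 4-state model N_4 (not necessarily ultrametric), P_α(X) ≥ P_β(X), i.e. P(MP(f,T) = {α} | ρ = α) ≥ P(MP(f,T) = {β} | ρ = α). -/
/-- A rooted binary phylogenetic tree: a `leaf` is a single taxon, and the
root of `node p₁ p₂ L R` has the roots of `L` and `R` as its two children,
attached by edges carrying one-specific-change probabilities `p₁` and `p₂`. -/
inductive PhyloTree : Type
  | leaf : PhyloTree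
  | node (p₁ p₂ : ℝ) (L R : PhyloTree) : PhyloTree

namespace PhyloTree

/-- The number of leaves (taxa) of the tree. -/
def nLeaves : PhyloTree → ℕ
  | leaf => 1
  | node _ _ L R => nLeaves L + nLeaves R

/-- All edge substitution probabilities of the tree lie in `[0, 1/4]`. -/
def valid : PhyloTree → Prop
  | leaf => True
  | node p₁ p₂ L R => 0 ≤ p₁ ∧ p₁ ≤ 1/4 ∧ 0 ≤ p₂ ∧ p₂ ≤ 1/4 ∧ valid L ∧ valid R

end PhyloTree

/-- Transition probabilities of the symmetric 4-state model `N₄`: conditional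
on the upper endpoint of an edge with substitution probability `q` being in
state `a`, the lower endpoint is in each specific state `b ≠ a` with
probability `q`, and in state `a` with probability `1 - 3q`. -/
noncomputable def trans4 (q : ℝ) (a b : Fin 4) : ℝ := if a = b then 1 - 3*q else q

/-- `charProb4 t a f` is the probability, conditional on the root of `t`
being in state `a`, that the leaves of `t` (read from left to right) are in
the states recorded by the list `f`.  States evolve independently along the
edges according to `trans4`. -/
noncomputable def charProb4 : PhyloTree → Fin 4 → List (Fin 4) → ℝ
  | .leaf, a, f => if f = [a] then 1 else 0
  | .node p₁ p₂ L R, a, f =>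
      ∑ b : Fin 4, ∑ c : Fin 4, trans4 p₁ a b * trans4 p₂ a c *
        charProb4 L b (f.take L.nLeaves) * charProb4 R c (f.drop L.nLeaves)

/-- Fitch's parsimony operation: `A ∩ B` if it is nonempty, `A ∪ B` otherwise. -/
def fitchOp {k : ℕ} (A B : Finset (Fin k)) : Finset (Fin k) :=
  if (A ∩ B).Nonempty then A ∩ B else A ∪ B

/-- The set `MP(f,T)` assigned to the root of `t` by the Fitch algorithm when
the leaves carry the character (list of leaf states) `f`. -/
def fitchSet4 : PhyloTree → List (Fin 4) → Finset (Fin 4)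
  | .leaf, [b] => {b}
  | .leaf, _ => ∅
  | .node _ _ L R, f =>
      fitchOp (fitchSet4 L (f.take L.nLeaves)) (fitchSet4 R (f.drop L.nLeaves))

/-- `rootProb4 t a R = P(MP(f,T) = R ∣ root state = a)`. -/
noncomputable def rootProb4 (t : PhyloTree) (a : Fin 4) (R : Finset (Fin 4)) : ℝ :=
  ∑ f : Fin t.nLeaves → Fin 4,
    if fitchSet4 t (List.ofFn f) = R then charProb4 t a (List.ofFn f) else 0

/-- The reconstruction accuracy
`RA(X) = ∑_{R ⊆ A, α ∈ R} (1/|R|) · P(MP(f,T) = R ∣ ρ = α)`, with `α := 0`. -/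
noncomputable def RA4 (t : PhyloTree) : ℝ :=
  ∑ R : Finset (Fin 4),
    if (0 : Fin 4) ∈ R then (R.card : ℝ)⁻¹ * rootProb4 t 0 R else 0

/-- `ultra4 t p`: the tree `t` is ultrametric, and the probability of one
specific state change from the root to any leaf is `p` (under `N₄`, the
one-specific-change probabilities compose along a path as
`p₁ ∘ q₁ = p₁ + q₁ - 4·p₁·q₁`). -/
def ultra4 : PhyloTree → ℝ → Prop
  | .leaf, p => p = 0
  | .node p₁ p₂ L R, p => ∃ q₁ q₂, ultra4 L q₁ ∧ ultra4 R q₂ ∧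
      p = p₁ + q₁ - 4*p₁*q₁ ∧ p = p₂ + q₂ - 4*p₂*q₂

/-!
Call `μ : Finset α → ℝ` swap-dominated at `a` if `μ (τ A) ≤ μ A` whenever `a ∈ A`, `b ∉ A` and
`τ` is the transposition `(a b)`. By induction on the tree, the law of the Fitch set given root
state `a` is swap-dominated at `a`; the theorem is the case `A = {α}`, `b = β`.

The Fitch operation preserves swap-domination: if `fitchOp A B = S` with `a ∈ S` and `b ∉ S`,
then `b ∈ A → a ∈ A` (in both the intersection and the union case), so `τ` either fixes `A` or
is dominated on it, and likewise for `B`. An `N₄` edge preserves it as well: since the model is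
invariant under relabelling the states, `P_a(τ A) = P_b(A)`, and the edge changes
`P_a(A) - P_a(τ A)` only by the factor `1 - 4p ≥ 0`.
-/

open Finset

lemma Finset.image_swap_eq_self {α : Type*} [DecidableEq α] {a b : α} {s : Finset α}
    (h : a ∈ s ↔ b ∈ s) : s.image (Equiv.swap a b) = s :=
  coe_injective (by simpa using (Equiv.swap_bijOn_self (s := (s : Set α)) h).image_eq)

lemma sum_pushforward_mul {J κ : Type*} [Fintype J] [Fintype κ] [DecidableEq κ] (χ : J → κ)
    (w : J → ℝ) (c : κ → ℝ) :
    ∑ x, (∑ j, if χ j = x then w j else 0) * c x = ∑ j, w j * c (χ j) := by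
  simp only [sum_mul, ite_mul, zero_mul]
  rw [sum_comm]
  simp

def SwapDominated {α : Type*} [DecidableEq α] (a : α) (μ : Finset α → ℝ) : Prop :=
  ∀ ⦃b : α⦄ ⦃A : Finset α⦄, a ∈ A → b ∉ A → μ (A.image (Equiv.swap a b)) ≤ μ A

lemma SwapDominated.image_swap_le {α : Type*} [DecidableEq α] {a b : α} {μ : Finset α → ℝ}
    (hμ : SwapDominated a μ) {A : Finset α} (hA : b ∈ A → a ∈ A) :
    μ (A.image (Equiv.swap a b)) ≤ μ A := by
  by_cases ha : a ∈ A
  · by_cases hb : b ∈ A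
    · rw [Finset.image_swap_eq_self (iff_of_true ha hb)]
    · exact hμ ha hb
  · rw [Finset.image_swap_eq_self (iff_of_false ha (mt hA ha))]

section Fitch

variable {k : ℕ}

lemma fitchOp_image (σ : Equiv.Perm (Fin k)) (A B : Finset (Fin k)) :
    fitchOp (A.image σ) (B.image σ) = (fitchOp A B).image σ := by
  simp only [fitchOp, ← image_inter _ _ σ.injective, image_nonempty]
  split_ifs
  · rfl
  · rw [image_union]

lemma imp_mem_of_fitchOp_eq {a b : Fin k} {A B S : Finset (Fin k)} (h : fitchOp A B = S)
    (ha : a ∈ S) (hb : b ∉ S) : (b ∈ A → a ∈ A) ∧ (b ∈ B → a ∈ B) := by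
  unfold fitchOp at h
  split_ifs at h <;> subst h <;> simp_all

/-- The law of the Fitch set at a vertex whose children's Fitch sets are independent with
laws `μ` and `ν`. -/
noncomputable def fitchConv (μ ν : Finset (Fin k) → ℝ) (S : Finset (Fin k)) : ℝ :=
  ∑ A, ∑ B, if fitchOp A B = S then μ A * ν B else 0

lemma fitchConv_image (σ : Equiv.Perm (Fin k)) (μ ν : Finset (Fin k) → ℝ) (S : Finset (Fin k)) :
    fitchConv μ ν (S.image σ) = fitchConv (fun A => μ (A.image σ)) (fun B => ν (B.image σ)) S := by
  unfold fitchConv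
  rw [← (Equiv.finsetCongr σ).sum_comp]
  refine sum_congr rfl fun A _ => ?_
  rw [← (Equiv.finsetCongr σ).sum_comp]
  refine sum_congr rfl fun B _ => ?_
  simp only [Equiv.finsetCongr_apply, map_eq_image, Equiv.coe_toEmbedding, fitchOp_image,
    (image_injective σ.injective).eq_iff]

lemma sum_sum_ite_fitchOp {G H : Type*} [Fintype G] [Fintype H] (φ : G → Finset (Fin k))
    (ψ : H → Finset (Fin k)) (u : G → ℝ) (v : H → ℝ) (S : Finset (Fin k)) :
    ∑ g, ∑ h, (if fitchOp (φ g) (ψ h) = S then u g * v h else 0) =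
      fitchConv (fun A => ∑ g, if φ g = A then u g else 0)
        (fun B => ∑ h, if ψ h = B then v h else 0) S := by
  let δ (A B : Finset (Fin k)) : ℝ := if fitchOp A B = S then 1 else 0
  calc _ = ∑ g, u g * ∑ h, v h * δ (φ g) (ψ h) := by simp [δ, mul_sum, mul_ite]
    _ = ∑ A, (∑ g, if φ g = A then u g else 0) * ∑ h, v h * δ A (ψ h) :=
      (sum_pushforward_mul φ u fun A => ∑ h, v h * δ A (ψ h)).symm
    _ = ∑ A, (∑ g, if φ g = A then u g else 0) *
          ∑ B, (∑ h, if ψ h = B then v h else 0) * δ A B := by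
      simp only [sum_pushforward_mul]
    _ = _ := by simp [fitchConv, δ, mul_sum, mul_ite]

lemma swapDominated_fitchConv {a : Fin k} {μ ν : Finset (Fin k) → ℝ}
    (hμ₀ : ∀ A, 0 ≤ μ A) (hν₀ : ∀ B, 0 ≤ ν B) (hμ : SwapDominated a μ)
    (hν : SwapDominated a ν) : SwapDominated a (fitchConv μ ν) := by
  intro b S ha hb
  rw [fitchConv_image]
  refine sum_le_sum fun A _ => sum_le_sum fun B _ => ?_
  split_ifs with hS
  · obtain ⟨hA, hB⟩ := imp_mem_of_fitchOp_eq hS ha hb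
    exact mul_le_mul (hμ.image_swap_le hA) (hν.image_swap_le hB) (hν₀ _) (hμ₀ _)
  · rfl

end Fitch

lemma trans4_nonneg {q : ℝ} (h₀ : 0 ≤ q) (h₁ : q ≤ 1/4) (a b : Fin 4) : 0 ≤ trans4 q a b := by
  unfold trans4; split_ifs <;> linarith

lemma trans4_perm (σ : Equiv.Perm (Fin 4)) (q : ℝ) (a b : Fin 4) :
    trans4 q (σ a) (σ b) = trans4 q a b := by
  simp [trans4]

lemma trans4_sub_trans4_swap (q : ℝ) (a b x : Fin 4) :
    trans4 q a x - trans4 q a (Equiv.swap a b x) =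
      (1 - 4 * q) * ((if x = a then 1 else 0) - if x = b then 1 else 0) := by
  rcases eq_or_ne a b with rfl | hab
  · simp
  rw [Equiv.swap_apply_def]
  split_ifs <;> simp_all [trans4, eq_comm] <;> ring

/-- The law of the Fitch set of a subtree whose root is reached from state `a` through an edge
with substitution probability `p`, when `P x` is its law given root state `x`. -/
noncomputable def edgeConv (p : ℝ) (P : Fin 4 → Finset (Fin 4) → ℝ) (a : Fin 4)
    (A : Finset (Fin 4)) : ℝ :=
  ∑ x, trans4 p a x * P x A

lemma edgeConv_nonneg {p : ℝ} (h₀ : 0 ≤ p) (h₁ : p ≤ 1/4) {P : Fin 4 → Finset (Fin 4) → ℝ}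
    (hP : ∀ x A, 0 ≤ P x A) (a : Fin 4) (A : Finset (Fin 4)) : 0 ≤ edgeConv p P a A :=
  sum_nonneg fun x _ => mul_nonneg (trans4_nonneg h₀ h₁ a x) (hP x A)

lemma swapDominated_edgeConv {p : ℝ} (hp : p ≤ 1/4) {P : Fin 4 → Finset (Fin 4) → ℝ}
    (hP : ∀ (σ : Equiv.Perm (Fin 4)) x A, P (σ x) (A.image σ) = P x A) {a : Fin 4}
    (ha : SwapDominated a (P a)) : SwapDominated a (edgeConv p P a) := by
  intro b A haA hbA
  have hswap (x : Fin 4) : P x (A.image (Equiv.swap a b)) = P (Equiv.swap a b x) A := by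
    simpa using hP (Equiv.swap a b) (Equiv.swap a b x) A
  have hdiff : edgeConv p P a A - edgeConv p P a (A.image (Equiv.swap a b)) =
      (1 - 4 * p) * (P a A - P b A) := by
    have hreindex : ∑ x, trans4 p a x * P (Equiv.swap a b x) A =
        ∑ x, trans4 p a (Equiv.swap a b x) * P x A := by
      simpa using Equiv.sum_comp (Equiv.swap a b) fun y => trans4 p a (Equiv.swap a b y) * P y A
    simp only [edgeConv, hswap, hreindex, ← sum_sub_distrib, ← sub_mul, trans4_sub_trans4_swap]
    simp only [mul_assoc, ← mul_sum, sub_mul, sum_sub_distrib, ite_mul, one_mul, zero_mul,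
      sum_ite_eq', mem_univ, if_true]
  have hb : P b A ≤ P a A := by
    simpa [hswap] using ha haA hbA
  nlinarith

lemma charProb4_nonneg : ∀ {t : PhyloTree}, t.valid → ∀ a f, 0 ≤ charProb4 t a f
  | .leaf, _, a, f => by unfold charProb4; split_ifs <;> norm_num
  | .node p₁ p₂ L R, ⟨h₁, h₂, h₃, h₄, hL, hR⟩, a, f => by
    unfold charProb4
    refine sum_nonneg fun b _ => sum_nonneg fun c _ => ?_
    have := trans4_nonneg h₁ h₂ a b
    have := trans4_nonneg h₃ h₄ a c
    have := charProb4_nonneg hL b (f.take L.nLeaves)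
    have := charProb4_nonneg hR c (f.drop L.nLeaves)
    positivity

lemma rootProb4_nonneg {t : PhyloTree} (hv : t.valid) (a : Fin 4) (A : Finset (Fin 4)) :
    0 ≤ rootProb4 t a A :=
  sum_nonneg fun _ _ => by split_ifs; exacts [charProb4_nonneg hv _ _, le_rfl]

lemma charProb4_map (σ : Equiv.Perm (Fin 4)) :
    ∀ (t : PhyloTree) (a : Fin 4) (f : List (Fin 4)),
      charProb4 t (σ a) (f.map σ) = charProb4 t a f
  | .leaf, a, f => by
    have : f.map σ = [a].map σ ↔ f = [a] := (List.map_injective_iff.mpr σ.injective).eq_iff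
    simp_all [charProb4]
  | .node p₁ p₂ L R, a, f => by
    unfold charProb4
    rw [← Equiv.sum_comp σ]
    refine sum_congr rfl fun b _ => ?_
    rw [← Equiv.sum_comp σ]
    refine sum_congr rfl fun c _ => ?_
    rw [trans4_perm, trans4_perm, ← List.map_take, ← List.map_drop, charProb4_map σ L,
      charProb4_map σ R]

lemma fitchSet4_map (σ : Equiv.Perm (Fin 4)) :
    ∀ (t : PhyloTree) (f : List (Fin 4)), fitchSet4 t (f.map σ) = (fitchSet4 t f).image σ
  | .leaf, [] | .leaf, [_] | .leaf, _ :: _ :: _ => by simp [fitchSet4]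
  | .node p₁ p₂ L R, f => by
    rw [fitchSet4, fitchSet4, ← List.map_take, ← List.map_drop, fitchSet4_map σ L,
      fitchSet4_map σ R, fitchOp_image]

lemma rootProb4_image (σ : Equiv.Perm (Fin 4)) (t : PhyloTree) (a : Fin 4)
    (A : Finset (Fin 4)) : rootProb4 t (σ a) (A.image σ) = rootProb4 t a A := by
  unfold rootProb4
  rw [← (Equiv.arrowCongr (Equiv.refl _) σ).sum_comp]
  refine sum_congr rfl fun f _ => ?_
  have hf : List.ofFn (Equiv.arrowCongr (Equiv.refl _) σ f) = (List.ofFn f).map σ := by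
    rw [List.map_ofFn]; rfl
  simp only [hf, fitchSet4_map, charProb4_map, (image_injective σ.injective).eq_iff]

lemma rootProb4_leaf (a : Fin 4) (A : Finset (Fin 4)) :
    rootProb4 .leaf a A = if A = {a} then 1 else 0 := by
  change ∑ f : Fin 1 → Fin 4,
    (if fitchSet4 .leaf (List.ofFn f) = A then charProb4 .leaf a (List.ofFn f) else 0) = _
  rw [← (Equiv.funUnique (Fin 1) (Fin 4)).symm.sum_comp]
  have hofFn (x : Fin 4) : List.ofFn ((Equiv.funUnique (Fin 1) (Fin 4)).symm x) = [x] := rfl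
  simp only [hofFn, fitchSet4, charProb4, List.cons.injEq, and_true]
  rw [Fintype.sum_eq_single a fun x hx => by simp [hx]]
  simp [eq_comm]

lemma fitchSet4_node_append (p₁ p₂ : ℝ) (L R : PhyloTree) {l₁ : List (Fin 4)}
    (hl : l₁.length = L.nLeaves) (l₂ : List (Fin 4)) :
    fitchSet4 (.node p₁ p₂ L R) (l₁ ++ l₂) = fitchOp (fitchSet4 L l₁) (fitchSet4 R l₂) := by
  rw [fitchSet4, List.take_left' hl, List.drop_left' hl]

lemma charProb4_node_append (p₁ p₂ : ℝ) (L R : PhyloTree) (a : Fin 4) {l₁ : List (Fin 4)}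
    (hl : l₁.length = L.nLeaves) (l₂ : List (Fin 4)) :
    charProb4 (.node p₁ p₂ L R) a (l₁ ++ l₂) =
      (∑ b, trans4 p₁ a b * charProb4 L b l₁) * ∑ c, trans4 p₂ a c * charProb4 R c l₂ := by
  rw [charProb4, List.take_left' hl, List.drop_left' hl, sum_mul_sum]
  exact sum_congr rfl fun b _ => sum_congr rfl fun c _ => by ring

lemma edgeConv_rootProb4 (t : PhyloTree) (p : ℝ) (a : Fin 4) (A : Finset (Fin 4)) :
    edgeConv p (rootProb4 t) a A = ∑ g : Fin t.nLeaves → Fin 4,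
      if fitchSet4 t (List.ofFn g) = A then
        ∑ x, trans4 p a x * charProb4 t x (List.ofFn g) else 0 := by
  simp only [edgeConv, rootProb4, mul_sum, mul_ite, mul_zero]
  rw [sum_comm]
  simp only [sum_ite_irrel, sum_const_zero]

lemma rootProb4_node (p₁ p₂ : ℝ) (L R : PhyloTree) (a : Fin 4) :
    rootProb4 (.node p₁ p₂ L R) a =
      fitchConv (edgeConv p₁ (rootProb4 L) a) (edgeConv p₂ (rootProb4 R) a) := by
  funext S
  simp only [funext (edgeConv_rootProb4 _ _ a), ← sum_sum_ite_fitchOp]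
  rw [← Fintype.sum_prod_type']
  refine (Fintype.sum_equiv (Fin.appendEquiv L.nLeaves R.nLeaves) _ _ fun ⟨g, h⟩ => ?_).symm
  change _ = if fitchSet4 _ (List.ofFn (Fin.append g h)) = S then
    charProb4 _ a (List.ofFn (Fin.append g h)) else 0
  rw [List.ofFn_fin_append, fitchSet4_node_append _ _ _ _ List.length_ofFn,
    charProb4_node_append _ _ _ _ _ List.length_ofFn]

lemma swapDominated_rootProb4 : ∀ {t : PhyloTree}, t.valid → ∀ a, SwapDominated a (rootProb4 t a)
  | .leaf, _, a => by
    intro b A ha hb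
    rw [rootProb4_leaf, rootProb4_leaf]
    split_ifs with hswap hA
    · rfl
    · have : b ∈ A.image (Equiv.swap a b) := mem_image.mpr ⟨a, ha, Equiv.swap_apply_left a b⟩
      rw [hswap, mem_singleton] at this
      exact absurd (this ▸ ha) hb
    · exact zero_le_one
    · rfl
  | .node p₁ p₂ L R, ⟨h₁, h₂, h₃, h₄, hL, hR⟩, a => by
    rw [rootProb4_node]
    exact swapDominated_fitchConv
      (edgeConv_nonneg h₁ h₂ (rootProb4_nonneg hL) a)
      (edgeConv_nonneg h₃ h₄ (rootProb4_nonneg hR) a)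
      (swapDominated_edgeConv h₂ (fun σ => rootProb4_image σ L) (swapDominated_rootProb4 hL a))
      (swapDominated_edgeConv h₄ (fun σ => rootProb4_image σ R) (swapDominated_rootProb4 hR a))

theorem rootProb4_alpha_ge_beta_general (t : PhyloTree)
    (hv : t.valid) :
    rootProb4 t 0 {0} ≥ rootProb4 t 0 {1} := by
  have h := swapDominated_rootProb4 hv 0 (b := 1) (mem_singleton_self 0) (by decide)
  rwa [image_singleton, Equiv.swap_apply_left] at h

/-- For any rooted binary phylogenetic tree under `N₄` (not
necessarily ultrametric), `P_α(X) ≥ P_β(X)`. -/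
theorem rootProb4_alpha_ge_beta (t : PhyloTree) (hn : 2 ≤ t.nLeaves)
    (hv : t.valid) :
    rootProb4 t 0 {0} ≥ rootProb4 t 0 {1} :=
  rootProb4_alpha_ge_beta_general t hv
end

section
/- For any rooted binary ultrametric phylogenetic tree T on a taxon set X evolving under the symmetric 4-state model N_4 and any two terminal taxa x_1, x_2 ∈ X, the reconstruction accuracy of the Fitch algorithm applied only to x_1 and x_2 equals RA({x_1,x_2}) = 1 − 3p, where p is the probability of one specific state change from the root to any leaf. -/
/-- `rootProbPair4 t a x₁ x₂ R = P((Fitch set on {x₁,x₂}) = R ∣ root = a)`: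
the Fitch algorithm applied to the restriction of the character to the two
leaves `x₁, x₂` returns `{f(x₁)} ∩ {f(x₂)} = {f(x₁)}` if `f(x₁) = f(x₂)` and
`{f(x₁), f(x₂)}` otherwise. -/
noncomputable def rootProbPair4 (t : PhyloTree) (a : Fin 4) (x₁ x₂ : Fin t.nLeaves)
    (R : Finset (Fin 4)) : ℝ :=
  ∑ f : Fin t.nLeaves → Fin 4,
    if (if f x₁ = f x₂ then ({f x₁} : Finset (Fin 4)) else {f x₁, f x₂}) = R then
      charProb4 t a (List.ofFn f) else 0

/-- The reconstruction accuracy using only the two terminal taxa `x₁, x₂`. -/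
noncomputable def RApair4 (t : PhyloTree) (x₁ x₂ : Fin t.nLeaves) : ℝ :=
  ∑ R : Finset (Fin 4),
    if (0 : Fin 4) ∈ R then (R.card : ℝ)⁻¹ * rootProbPair4 t 0 x₁ x₂ R else 0


section Aux

open Finset

lemma trans4_sum (q : ℝ) (a : Fin 4) : ∑ b : Fin 4, trans4 q a b = 1 := by
  fin_cases a <;> simp (config := { decide := true }) [Fin.sum_univ_four, trans4] <;> ring

lemma trans4_comp (p q : ℝ) (a b : Fin 4) :
    ∑ c : Fin 4, trans4 p a c * trans4 q c b = trans4 (p + q - 4*p*q) a b := by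
  fin_cases a <;> fin_cases b <;>
    simp (config := { decide := true }) [Fin.sum_univ_four, trans4] <;> ring

lemma split_sum {nL nR : ℕ} (F : (Fin (nL + nR) → Fin 4) → ℝ) :
    ∑ f : Fin (nL + nR) → Fin 4, F f =
      ∑ g : Fin nL → Fin 4, ∑ h : Fin nR → Fin 4, F (Fin.append g h) := by
  rw [← Equiv.sum_comp (Fin.appendEquiv (α := Fin 4) nL nR) F, Fintype.sum_prod_type]
  rfl

lemma charProb4_node (p₁ p₂ : ℝ) (L R : PhyloTree) (a : Fin 4)
    (g : Fin L.nLeaves → Fin 4) (h : Fin R.nLeaves → Fin 4) :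
    charProb4 (.node p₁ p₂ L R) a (List.ofFn (Fin.append g h)) =
      ∑ b : Fin 4, ∑ c : Fin 4, trans4 p₁ a b * trans4 p₂ a c *
        charProb4 L b (List.ofFn g) * charProb4 R c (List.ofFn h) := by
  have h1 : (List.ofFn (Fin.append g h)).take L.nLeaves = List.ofFn g := by
    rw [List.ofFn_fin_append, List.take_left' (by simp)]
  have h2 : (List.ofFn (Fin.append g h)).drop L.nLeaves = List.ofFn h := by
    rw [List.ofFn_fin_append, List.drop_left' (by simp)]
  rw [charProb4, h1, h2]

lemma sum_mul_sum' {α β : Type*} [Fintype α] [Fintype β] (f : α → ℝ) (g : β → ℝ) :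
    ∑ a : α, ∑ b : β, f a * g b = (∑ a : α, f a) * (∑ b : β, g b) := by
  rw [Finset.sum_mul_sum]

lemma charProb4_total : ∀ (t : PhyloTree) (a : Fin 4),
    ∑ f : Fin t.nLeaves → Fin 4, charProb4 t a (List.ofFn f) = 1 := by
  intro t
  induction t with
  | leaf =>
      intro a
      show ∑ f : Fin 1 → Fin 4, charProb4 .leaf a (List.ofFn f) = 1
      rw [← Equiv.sum_comp (Equiv.funUnique (Fin 1) (Fin 4)).symm]
      simp [charProb4, List.ofFn_succ, Finset.sum_ite_eq']
  | node p₁ p₂ L R ihL ihR =>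
      intro a
      show ∑ f : Fin (L.nLeaves + R.nLeaves) → Fin 4, _ = 1
      rw [split_sum]
      calc ∑ g : Fin L.nLeaves → Fin 4, ∑ h : Fin R.nLeaves → Fin 4,
              charProb4 (.node p₁ p₂ L R) a (List.ofFn (Fin.append g h))
          = ∑ g : Fin L.nLeaves → Fin 4, ∑ h : Fin R.nLeaves → Fin 4,
              (∑ b : Fin 4, trans4 p₁ a b * charProb4 L b (List.ofFn g)) *
              (∑ c : Fin 4, trans4 p₂ a c * charProb4 R c (List.ofFn h)) := by
            refine Finset.sum_congr rfl fun g _ => Finset.sum_congr rfl fun h _ => ?_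
            rw [charProb4_node, ← sum_mul_sum']
            refine Finset.sum_congr rfl fun b _ => Finset.sum_congr rfl fun c _ => ?_
            ring
        _ = (∑ g : Fin L.nLeaves → Fin 4,
              ∑ b : Fin 4, trans4 p₁ a b * charProb4 L b (List.ofFn g)) *
            (∑ h : Fin R.nLeaves → Fin 4,
              ∑ c : Fin 4, trans4 p₂ a c * charProb4 R c (List.ofFn h)) := sum_mul_sum' _ _
        _ = 1 := by
            rw [Finset.sum_comm, Finset.sum_comm (s := Finset.univ (α := Fin R.nLeaves → Fin 4))]
            simp only [← Finset.mul_sum]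
            rw [show (∑ b : Fin 4, trans4 p₁ a b *
                  ∑ g : Fin L.nLeaves → Fin 4, charProb4 L b (List.ofFn g)) = 1 by
                simp only [ihL, mul_one]; exact trans4_sum p₁ a,
              show (∑ c : Fin 4, trans4 p₂ a c *
                  ∑ h : Fin R.nLeaves → Fin 4, charProb4 R c (List.ofFn h)) = 1 by
                simp only [ihR, mul_one]; exact trans4_sum p₂ a, mul_one]

lemma marg4 : ∀ (t : PhyloTree) (p : ℝ), ultra4 t p → ∀ (a b : Fin 4) (x : Fin t.nLeaves),
    ∑ f : Fin t.nLeaves → Fin 4,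
      (if f x = b then charProb4 t a (List.ofFn f) else 0) = trans4 p a b := by
  intro t
  induction t with
  | leaf =>
      intro p hp a b
      subst hp
      show ∀ x : Fin 1, (∑ f : Fin 1 → Fin 4,
        if f x = b then charProb4 .leaf a (List.ofFn f) else 0) = trans4 0 a b
      intro x
      have hx : x = 0 := Subsingleton.elim x 0
      subst hx
      rw [← Equiv.sum_comp (Equiv.funUnique (Fin 1) (Fin 4)).symm]
      simp only [Equiv.funUnique_symm_apply, charProb4]
      simp [List.ofFn_succ, trans4, Finset.sum_ite_eq, eq_comm]
  | node p₁ p₂ L R ihL ihR =>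
      intro p hp a b
      obtain ⟨q₁, q₂, huL, huR, hp1, hp2⟩ := hp
      show ∀ x : Fin (L.nLeaves + R.nLeaves), (∑ f : Fin (L.nLeaves + R.nLeaves) → Fin 4,
        if f x = b then charProb4 (.node p₁ p₂ L R) a (List.ofFn f) else 0) = trans4 p a b
      intro x
      induction x using Fin.addCases with
      | left x' =>
          rw [split_sum]
          calc ∑ g : Fin L.nLeaves → Fin 4, ∑ h : Fin R.nLeaves → Fin 4,
                  (if Fin.append g h (Fin.castAdd R.nLeaves x') = b then
                    charProb4 (.node p₁ p₂ L R) a (List.ofFn (Fin.append g h)) else 0)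
              = ∑ g : Fin L.nLeaves → Fin 4, ∑ h : Fin R.nLeaves → Fin 4,
                  (∑ c : Fin 4, trans4 p₁ a c *
                    (if g x' = b then charProb4 L c (List.ofFn g) else 0)) *
                  (∑ c : Fin 4, trans4 p₂ a c * charProb4 R c (List.ofFn h)) := by
                refine Finset.sum_congr rfl fun g _ => Finset.sum_congr rfl fun h _ => ?_
                rw [Fin.append_left, charProb4_node]
                by_cases hgb : g x' = b
                · simp only [hgb, if_true, ← sum_mul_sum']
                  refine Finset.sum_congr rfl fun c _ => Finset.sum_congr rfl fun d _ => ?_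
                  ring
                · simp [hgb]
            _ = (∑ g : Fin L.nLeaves → Fin 4, ∑ c : Fin 4, trans4 p₁ a c *
                    (if g x' = b then charProb4 L c (List.ofFn g) else 0)) *
                (∑ h : Fin R.nLeaves → Fin 4, ∑ c : Fin 4, trans4 p₂ a c *
                    charProb4 R c (List.ofFn h)) := sum_mul_sum' _ _
            _ = trans4 p a b := by
                rw [Finset.sum_comm, Finset.sum_comm (s := Finset.univ (α := Fin R.nLeaves → Fin 4))]
                simp only [← Finset.mul_sum]
                simp only [ihL q₁ huL, charProb4_total, mul_one]
                rw [trans4_sum, mul_one, trans4_comp, ← hp1]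
      | right x' =>
          rw [split_sum]
          calc ∑ g : Fin L.nLeaves → Fin 4, ∑ h : Fin R.nLeaves → Fin 4,
                  (if Fin.append g h (Fin.natAdd L.nLeaves x') = b then
                    charProb4 (.node p₁ p₂ L R) a (List.ofFn (Fin.append g h)) else 0)
              = ∑ g : Fin L.nLeaves → Fin 4, ∑ h : Fin R.nLeaves → Fin 4,
                  (∑ c : Fin 4, trans4 p₁ a c * charProb4 L c (List.ofFn g)) *
                  (∑ c : Fin 4, trans4 p₂ a c *
                    (if h x' = b then charProb4 R c (List.ofFn h) else 0)) := by
                refine Finset.sum_congr rfl fun g _ => Finset.sum_congr rfl fun h _ => ?_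
                rw [Fin.append_right, charProb4_node]
                by_cases hhb : h x' = b
                · simp only [hhb, if_true, ← sum_mul_sum']
                  refine Finset.sum_congr rfl fun c _ => Finset.sum_congr rfl fun d _ => ?_
                  ring
                · simp [hhb]
            _ = (∑ g : Fin L.nLeaves → Fin 4, ∑ c : Fin 4, trans4 p₁ a c *
                    charProb4 L c (List.ofFn g)) *
                (∑ h : Fin R.nLeaves → Fin 4, ∑ c : Fin 4, trans4 p₂ a c *
                    (if h x' = b then charProb4 R c (List.ofFn h) else 0)) := sum_mul_sum' _ _
            _ = trans4 p a b := by
                rw [Finset.sum_comm, Finset.sum_comm (s := Finset.univ (α := Fin R.nLeaves → Fin 4))]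
                simp only [← Finset.mul_sum]
                simp only [ihR q₂ huR, charProb4_total, mul_one]
                rw [trans4_sum, one_mul, trans4_comp, ← hp2]

end Aux

/-- For any rooted binary ultrametric phylogenetic tree under
`N₄` and any two terminal taxa `x₁, x₂`, the reconstruction accuracy of the
Fitch algorithm applied only to `x₁` and `x₂` equals `1 - 3p`. -/
theorem RApair4_eq (t : PhyloTree) (p : ℝ) (hn : 2 ≤ t.nLeaves)
    (hv : t.valid) (hu : ultra4 t p) (x₁ x₂ : Fin t.nLeaves) (hx : x₁ ≠ x₂) :
    RApair4 t x₁ x₂ = 1 - 3*p := by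
  classical
  have h1 : RApair4 t x₁ x₂ =
      ∑ R : Finset (Fin 4), ∑ f : Fin t.nLeaves → Fin 4,
        (if (if f x₁ = f x₂ then ({f x₁} : Finset (Fin 4)) else {f x₁, f x₂}) = R then
          (if (0 : Fin 4) ∈ R then (R.card : ℝ)⁻¹ * charProb4 t 0 (List.ofFn f) else 0)
        else 0) := by
    unfold RApair4 rootProbPair4
    refine Finset.sum_congr rfl fun R _ => ?_
    by_cases h0 : (0 : Fin 4) ∈ R
    · simp only [h0, if_true, Finset.mul_sum, mul_ite, mul_zero]
    · simp [h0]
  rw [h1, Finset.sum_comm]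
  have h2 : ∀ f : Fin t.nLeaves → Fin 4,
      (∑ R : Finset (Fin 4),
        if (if f x₁ = f x₂ then ({f x₁} : Finset (Fin 4)) else {f x₁, f x₂}) = R then
          (if (0 : Fin 4) ∈ R then (R.card : ℝ)⁻¹ * charProb4 t 0 (List.ofFn f) else 0)
        else 0)
      = (1/2) * ((if f x₁ = 0 then charProb4 t 0 (List.ofFn f) else 0) +
          (if f x₂ = 0 then charProb4 t 0 (List.ofFn f) else 0)) := by
    intro f
    rw [Finset.sum_ite_eq]
    simp only [Finset.mem_univ, if_true]
    by_cases h12 : f x₁ = f x₂ <;> by_cases hA : f x₁ = 0 <;> by_cases hB : f x₂ = 0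
    · rw [if_pos h12, if_pos (by simp [hA] : (0 : Fin 4) ∈ ({f x₁} : Finset (Fin 4))),
        Finset.card_singleton, if_pos hA, if_pos hB]
      push_cast
      ring
    · exact absurd (h12.symm.trans hA) hB
    · exact absurd (h12.trans hB) hA
    · rw [if_pos h12, if_neg (by simp [eq_comm, hA] :
        ¬ (0 : Fin 4) ∈ ({f x₁} : Finset (Fin 4))), if_neg hA, if_neg hB]
      norm_num
    · exact absurd (hA.trans hB.symm) h12
    · rw [if_neg h12, if_pos (by simp [hA] :
          (0 : Fin 4) ∈ ({f x₁, f x₂} : Finset (Fin 4))),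
        Finset.card_pair h12, if_pos hA, if_neg hB]
      push_cast
      ring
    · rw [if_neg h12, if_pos (by simp [hB] :
          (0 : Fin 4) ∈ ({f x₁, f x₂} : Finset (Fin 4))),
        Finset.card_pair h12, if_neg hA, if_pos hB]
      push_cast
      ring
    · rw [if_neg h12, if_neg (by simp [eq_comm, hA, hB] :
          ¬ (0 : Fin 4) ∈ ({f x₁, f x₂} : Finset (Fin 4))), if_neg hA, if_neg hB]
      norm_num
  rw [Finset.sum_congr rfl (fun f _ => h2 f), ← Finset.mul_sum, Finset.sum_add_distrib,
    marg4 t p hu 0 0 x₁, marg4 t p hu 0 0 x₂]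
  rw [show trans4 p 0 0 = 1 - 3*p from if_pos rfl]
  ring
end

section
/- Let x_1 and x_2 be two leaves of a rooted binary phylogenetic tree evolving under the symmetric 4-state model N_4, let y be their most recent common ancestor, let p̄ ∈ [0,1/4] be the probability of one specific state change from the root ρ to y, and suppose the probability of one specific state change from y to x_1 and from y to x_2 both equal p̂ ∈ [0,1/4]. Then, conditional on ρ = α, P(f(x_1) = f(x_2) = α') for the Fitch set on {x_1,x_2} satisfies: P_α({x_1,x_2}) = P(Fitch set = {α} | ρ = α) = (1 − 3p̄)(1 − 3p̂)² + 3p̄p̂², and P_{αβ}({x_1,x_2}) = P(Fitch set = {α,β} | ρ = α) = 2(1 − 2p̄)(1 − 3p̂)p̂ + 4p̄p̂². -/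
set_option maxHeartbeats 1000000


/-- Let `x₁, x₂` be two leaves with most recent common
ancestor `y`, let `pb = p̄ ∈ [0,1/4]` be the one-specific-change probability
from the root `ρ` to `y`, and let `ph = p̂ ∈ [0,1/4]` be the
one-specific-change probability from `y` to each of `x₁` and `x₂`.
Conditional on `ρ = α = 0`, summing over the state `b` of `y` and the
independent leaf states `s₁, s₂`, the Fitch set on `{x₁, x₂}` (namely
`{s₁}` if `s₁ = s₂` and `{s₁, s₂}` otherwise) equals `{α}` with probability
`(1-3p̄)(1-3p̂)² + 3p̄p̂²`, and equals `{α,β}` with probability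
`2(1-2p̄)(1-3p̂)p̂ + 4p̄p̂²`. -/
theorem pair_fitch_probs (pb ph : ℝ) (hb₀ : 0 ≤ pb) (hb₁ : pb ≤ 1/4)
    (hh₀ : 0 ≤ ph) (hh₁ : ph ≤ 1/4) :
    (∑ b : Fin 4, trans4 pb 0 b *
        ∑ s₁ : Fin 4, ∑ s₂ : Fin 4, trans4 ph b s₁ * trans4 ph b s₂ *
          (if (if s₁ = s₂ then ({s₁} : Finset (Fin 4)) else {s₁, s₂}) = {0}
            then 1 else 0))
      = (1 - 3*pb) * (1 - 3*ph)^2 + 3*pb*ph^2 ∧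
    (∑ b : Fin 4, trans4 pb 0 b *
        ∑ s₁ : Fin 4, ∑ s₂ : Fin 4, trans4 ph b s₁ * trans4 ph b s₂ *
          (if (if s₁ = s₂ then ({s₁} : Finset (Fin 4)) else {s₁, s₂}) = {0, 1}
            then 1 else 0))
      = 2*(1 - 2*pb)*(1 - 3*ph)*ph + 4*pb*ph^2 := by
  constructor <;>
  · simp only [Fin.sum_univ_four, trans4]
    norm_num (config := { decide := true })
    ring
end
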